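/- Let G be a cubic (3-regular) negative Lehman graph (k = -1) and let M be any perfect matching of G. Then the biclique expansion e(G,M), obtained by replacing each matching edge {b_i, w_i} by a copy of K_{2,2} and distributing the non-matching edges so that the result is 3-regular, is a cubic Lehman graph with k = 1. -/

import Mathlib

/-!
Write `E` for the incidence matrix of the blocks `{i} × Fin 2` (`blowUp`). The bicliques account
for `E Eᵀ`, and what remains of `A'` is a 0-1 matrix with all line sums `1`, i.e. a permutation
matrix `P`, so `A' = E Eᵀ + P`; moreover `Eᵀ P E = X - I` for `X = A` reindexed by `σ`.
Since `X` has all line sums `3` it commutes with `J`, and `J - I` is invertible over `ℚ`, so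
`X Yᵀ = J - I` (with `Y = B` reindexed by `σ`) commutes to `Yᵀ X = J - I`, as in Lehman's theorem.
The witness is `B' = P + P (E Yᵀ Eᵀ) P`: expanding, `A' B'ᵀ = I + E (I + Xᵀ Y) Eᵀ Pᵀ
= I + E J Eᵀ Pᵀ = I + J`. It is a 0-1 matrix because the diagonal of `A Bᵀ` vanishes, so `B` is
zero wherever `A` is one, in particular at the entries that `P` hits.
-/

open Matrix BigOperators

/-- A (0,1)-matrix: every entry is 0 or 1. -/
def is01 {m n : Type*} (A : Matrix m n ℤ) : Prop := ∀ i j, A i j = 0 ∨ A i j = 1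

open Finset Equiv

local notation "𝕁" => Matrix.of fun _ _ => 1

namespace Matrix

section AllOnes

variable {n : Type*} [Fintype n]

theorem ones_mul_ones {K : Type*} [Semiring K] :
    (𝕁 : Matrix n n K) * 𝕁 = (Fintype.card n : K) • 𝕁 := by
  ext i j
  simp [mul_apply]

theorem commute_ones_of_sum_eq {R : Type*} [NonAssocSemiring R] {X : Matrix n n R} {c : R}
    (hrow : ∀ i, ∑ j, X i j = c) (hcol : ∀ j, ∑ i, X i j = c) : Commute X 𝕁 := by
  ext i j
  simp [mul_apply, hrow, hcol]

variable [DecidableEq n]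

theorem mul_eq_of_mul_eq_of_commute {R : Type*} [CommRing R] {X Y C : Matrix n n R}
    (hXY : X * Y = C) (hC : IsUnit C) (hXC : Commute X C) : Y * X = C := by
  obtain ⟨C', hCC'⟩ := hC.exists_right_inv
  have hC'C : C' * C = 1 := mul_eq_one_comm.mp hCC'
  have hinv : Y * C' * X = 1 := mul_eq_one_comm.mp (by rw [← Matrix.mul_assoc, hXY, hCC'])
  calc Y * X = Y * C' * (C * X) := by
        rw [Matrix.mul_assoc, ← Matrix.mul_assoc C', hC'C, Matrix.one_mul]
    _ = C := by rw [← hXC.eq, ← Matrix.mul_assoc, hinv, Matrix.one_mul]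

theorem isUnit_ones_sub_one {K : Type*} [Field K] (hn : (Fintype.card n : K) ≠ 1) :
    IsUnit ((𝕁 : Matrix n n K) - 1) := by
  have hn' : (Fintype.card n : K) - 1 ≠ 0 := sub_ne_zero.mpr hn
  refine IsUnit.of_mul_eq_one (((Fintype.card n : K) - 1)⁻¹ • 𝕁 - 1) ?_
  rw [Matrix.sub_mul, Matrix.mul_sub, Matrix.mul_sub, Matrix.mul_smul, ones_mul_ones, smul_smul,
    Matrix.mul_one, Matrix.one_mul, Matrix.one_mul]
  have hcoef : ((Fintype.card n : K) - 1)⁻¹ * Fintype.card n =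
      1 + ((Fintype.card n : K) - 1)⁻¹ := by
    field_simp
    ring
  rw [hcoef, add_smul, one_smul]
  abel

theorem mul_eq_ones_sub_one_comm {X Y : Matrix n n ℤ} (hn : Fintype.card n ≠ 1)
    (hXY : X * Y = 𝕁 - 1) (hX : Commute X 𝕁) : Y * X = 𝕁 - 1 := by
  let f := (Int.castRingHom ℚ).mapMatrix (m := n)
  have hf : f (𝕁 - 1) = 𝕁 - 1 := by
    rw [map_sub, map_one]
    rfl
  apply map_injective (f := ((↑) : ℤ → ℚ)) Int.cast_injective
  change f (Y * X) = f (𝕁 - 1)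
  rw [map_mul, hf]
  refine mul_eq_of_mul_eq_of_commute ?_ (isUnit_ones_sub_one (by exact_mod_cast hn)) ?_
  · rw [← map_mul, hXY, hf]
  · rw [← hf]
    exact (hX.sub_right (Commute.one_right X)).map f

end AllOnes

section Permutation

variable {N R : Type*} [Fintype N] [DecidableEq N] [NonAssocSemiring R]

theorem permMatrix_mul_mul_permMatrix_apply (e : Perm N) (M : Matrix N N R) (y z : N) :
    (e.permMatrix R * M * e.permMatrix R) y z = M (e y) (e.symm z) := by
  rw [PEquiv.toMatrix_toPEquiv_mul, PEquiv.mul_toMatrix_toPEquiv]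
  rfl

theorem permMatrix_mul_transpose_permMatrix (e : Perm N) :
    e.permMatrix R * (e.permMatrix R)ᵀ = 1 := by
  rw [transpose_permMatrix, ← permMatrix_mul, inv_mul_cancel, permMatrix_one]

theorem ones_mul_transpose_permMatrix (e : Perm N) :
    (𝕁 : Matrix N N R) * (e.permMatrix R)ᵀ = 𝕁 := by
  rw [transpose_permMatrix, PEquiv.mul_toMatrix_toPEquiv]
  rfl

end Permutation

theorem mul_transpose_eq_ones_add_one {N n R : Type*} [Fintype N] [Fintype n] [DecidableEq N]
    [DecidableEq n] [CommRing R] {E : Matrix N n R} {P : Matrix N N R} {X Y : Matrix n n R}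
    (hP : P * Pᵀ = 1) (hJP : (𝕁 : Matrix N N R) * Pᵀ = 𝕁)
    (hE : E * (𝕁 : Matrix n n R) * Eᵀ = 𝕁) (hX : Eᵀ * P * E = X - 1) (hYX : Yᵀ * X = 𝕁 - 1) :
    (E * Eᵀ + P) * (P + P * (E * Yᵀ * Eᵀ) * P)ᵀ = 𝕁 + 1 := by
  have hX' : Eᵀ * Pᵀ * E = Xᵀ - 1 := by
    simpa [transpose_mul, Matrix.mul_assoc] using congrArg transpose hX
  have hXY : Xᵀ * Y = 𝕁 - 1 := by
    rw [← transpose_transpose Y, ← transpose_mul, hYX, transpose_sub, transpose_one]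
    rfl
  have hmid : 1 + Eᵀ * Pᵀ * E * Y + Y = 𝕁 := by
    rw [hX', Matrix.sub_mul, hXY, Matrix.one_mul]
    abel
  calc (E * Eᵀ + P) * (P + P * (E * Yᵀ * Eᵀ) * P)ᵀ
      = E * (1 + Eᵀ * Pᵀ * E * Y) * Eᵀ * Pᵀ + P * Pᵀ * (1 + E * Y * Eᵀ * Pᵀ) := by
        simp only [transpose_add, transpose_mul, transpose_transpose, Matrix.mul_add,
          Matrix.add_mul, Matrix.mul_assoc, Matrix.mul_one]
        abel
    _ = E * (1 + Eᵀ * Pᵀ * E * Y + Y) * Eᵀ * Pᵀ + 1 := by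
        simp only [hP, Matrix.mul_add, Matrix.add_mul, Matrix.mul_assoc, Matrix.one_mul]
        abel
    _ = 𝕁 + 1 := by rw [hmid, hE, hJP]

end Matrix

section ZeroOne

variable {m n : Type*}

theorem is01.nonneg {A : Matrix m n ℤ} (hA : is01 A) (i : m) (j : n) : 0 ≤ A i j := by
  rcases hA i j with h | h <;> omega

theorem is01.sum_le_card [Fintype n] {A : Matrix m n ℤ} (hA : is01 A) (i : m) :
    ∑ j, A i j ≤ Fintype.card n := by
  simpa using Finset.sum_le_sum fun j (_ : j ∈ univ) =>
    (hA i j).elim (·.le.trans zero_le_one) le_of_eq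

theorem is01.eq_zero_of_mul_transpose_apply_eq_zero [Fintype n] {A B : Matrix m n ℤ}
    (hA : is01 A) (hB : is01 B) {i i' : m} {j : n} (h : (A * Bᵀ) i i' = 0) (hj : A i j = 1) :
    B i' j = 0 := by
  simp only [mul_apply, transpose_apply] at h
  simpa [hj] using (Finset.sum_eq_zero_iff_of_nonneg fun l _ =>
    mul_nonneg (hA.nonneg i l) (hB.nonneg i' l)).mp h j (mem_univ j)

theorem existsUnique_eq_one_of_sum_eq_one [Fintype m] {f : m → ℤ}
    (h01 : ∀ a, f a = 0 ∨ f a = 1) (hsum : ∑ a, f a = 1) : ∃! a, f a = 1 := by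
  classical
  have hcard : #{a | f a = 1} = 1 := by
    have hboole : ∑ a, f a = ∑ a, if f a = 1 then 1 else 0 :=
      Finset.sum_congr rfl fun a _ => by rcases h01 a with h | h <;> simp [h]
    rw [hboole, Finset.sum_boole] at hsum
    exact_mod_cast hsum
  obtain ⟨a, ha⟩ := Finset.card_eq_one.mp hcard
  simp only [Finset.eq_singleton_iff_unique_mem, Finset.mem_filter, Finset.mem_univ,
    true_and] at ha
  exact ⟨a, ha⟩

theorem is01_permMatrix [DecidableEq n] (e : Perm n) : is01 (e.permMatrix ℤ) := fun y z => by
  by_cases h : e y = z <;> simp [PEquiv.toMatrix_apply, h]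

variable [Fintype n] [DecidableEq n]

theorem exists_eq_permMatrix_of_is01 {M : Matrix n n ℤ} (h01 : is01 M)
    (hrow : ∀ i, ∑ j, M i j = 1) (hcol : ∀ j, ∑ i, M i j = 1) :
    ∃ e : Perm n, M = e.permMatrix ℤ := by
  choose f hf hfu using fun i => existsUnique_eq_one_of_sum_eq_one (h01 i) (hrow i)
  have hinj : f.Injective := fun i i' h =>
    (existsUnique_eq_one_of_sum_eq_one (fun i => h01 i (f i')) (hcol (f i'))).unique
      (h ▸ hf i) (hf i')
  refine ⟨Equiv.ofBijective f hinj.bijective_of_finite, ?_⟩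
  ext i j
  simp only [PEquiv.toMatrix_apply, toPEquiv_apply, Option.mem_some_iff, ofBijective_apply]
  split_ifs with h
  · exact h ▸ hf i
  · exact (h01 i j).resolve_right fun h' => h (hfu i j h').symm

theorem is01_permMatrix_add_permMatrix_mul_mul (e : Perm n) {F : Matrix n n ℤ} (hF : is01 F)
    (hdiag : ∀ y, F (e y) y = 0) :
    is01 (e.permMatrix ℤ + e.permMatrix ℤ * F * e.permMatrix ℤ) := by
  intro y z
  rw [Matrix.add_apply, permMatrix_mul_mul_permMatrix_apply]
  by_cases hz : e y = z
  · subst hz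
    simp [PEquiv.toMatrix_apply, hdiag]
  · simpa [PEquiv.toMatrix_apply, hz] using hF (e y) (e.symm z)

end ZeroOne

section BlowUp

variable {m k n R : Type*} [DecidableEq m]

def blowUp (m k R : Type*) [DecidableEq m] [Zero R] [One R] : Matrix (m × k) m R :=
  of fun x i => if x.1 = i then 1 else 0

theorem blowUp_mul_apply [Fintype m] [NonAssocSemiring R] (M : Matrix m n R) (x : m × k) (c : n) :
    (blowUp m k R * M) x c = M x.1 c := by
  simp [blowUp, mul_apply]

theorem mul_transpose_blowUp_apply [Fintype m] [NonAssocSemiring R] (M : Matrix n m R) (r : n)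
    (z : m × k) : (M * (blowUp m k R)ᵀ) r z = M r z.1 := by
  simp [blowUp, mul_apply]

theorem mul_blowUp_apply [Fintype m] [Fintype k] [NonAssocSemiring R] (M : Matrix n (m × k) R)
    (r : n) (j : m) : (M * blowUp m k R) r j = ∑ q, M r (j, q) := by
  rw [mul_apply, Fintype.sum_prod_type, Finset.sum_comm]
  simp [blowUp]

theorem transpose_blowUp_mul_apply [Fintype m] [Fintype k] [NonAssocSemiring R]
    (M : Matrix (m × k) n R) (i : m) (c : n) : ((blowUp m k R)ᵀ * M) i c = ∑ p, M (i, p) c := by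
  rw [mul_apply, Fintype.sum_prod_type, Finset.sum_comm]
  simp [blowUp]

theorem transpose_blowUp_mul_mul_blowUp_apply [Fintype m] [Fintype k] [NonAssocSemiring R]
    (M : Matrix (m × k) (m × k) R) (i j : m) :
    ((blowUp m k R)ᵀ * M * blowUp m k R) i j = ∑ p, ∑ q, M (i, p) (j, q) := by
  rw [mul_blowUp_apply]
  simp_rw [transpose_blowUp_mul_apply]
  exact Finset.sum_comm

theorem blowUp_mul_transpose_apply [Fintype m] [NonAssocSemiring R] (x z : m × k) :
    (blowUp m k R * (blowUp m k R)ᵀ) x z = if x.1 = z.1 then 1 else 0 :=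
  mul_transpose_blowUp_apply _ x z

theorem sum_row_blowUp_mul_transpose [Fintype m] [Fintype k] [NonAssocSemiring R] (x : m × k) :
    ∑ z, (blowUp m k R * (blowUp m k R)ᵀ) x z = Fintype.card k := by
  rw [Fintype.sum_prod_type, Finset.sum_comm]
  simp [blowUp_mul_transpose_apply]

theorem sum_col_blowUp_mul_transpose [Fintype m] [Fintype k] [NonAssocSemiring R] (z : m × k) :
    ∑ x, (blowUp m k R * (blowUp m k R)ᵀ) x z = Fintype.card k := by
  rw [Fintype.sum_prod_type, Finset.sum_comm]
  simp [blowUp_mul_transpose_apply]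

theorem blowUp_mul_mul_transpose_apply [Fintype m] [NonAssocSemiring R] (M : Matrix m m R)
    (x z : m × k) : (blowUp m k R * M * (blowUp m k R)ᵀ) x z = M x.1 z.1 := by
  rw [mul_transpose_blowUp_apply, blowUp_mul_apply]

theorem blowUp_mul_ones_mul_transpose [Fintype m] [NonAssocSemiring R] :
    blowUp m k R * (𝕁 : Matrix m m R) * (blowUp m k R)ᵀ = 𝕁 := by
  ext x z
  rw [blowUp_mul_mul_transpose_apply]
  rfl

theorem apply_le_transpose_blowUp_mul_mul_blowUp_apply [Fintype m] [Fintype k]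
    {M : Matrix (m × k) (m × k) ℤ} (hM : ∀ x z, 0 ≤ M x z) (x z : m × k) :
    M x z ≤ ((blowUp m k ℤ)ᵀ * M * blowUp m k ℤ) x.1 z.1 := by
  rw [transpose_blowUp_mul_mul_blowUp_apply, ← Fintype.sum_prod_type']
  exact single_le_sum (fun _ _ => hM _ _) (mem_univ (x.2, z.2))

end BlowUp

section Expansion

variable {m k : Type*} [Fintype m] [Fintype k] [DecidableEq m] [DecidableEq k]
  {A' : Matrix (m × k) (m × k) ℤ}

theorem exists_perm_eq_blowUp_mul_transpose_add_permMatrix (h01 : is01 A')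
    (hblock : ∀ i p q, A' (i, p) (i, q) = 1)
    (hrow : ∀ x, ∑ z, A' x z = Fintype.card k + 1) (hcol : ∀ z, ∑ x, A' x z = Fintype.card k + 1) :
    ∃ e : Perm (m × k), (∀ x, (e x).1 ≠ x.1) ∧
      A' = blowUp m k ℤ * (blowUp m k ℤ)ᵀ + e.permMatrix ℤ := by
  set P := A' - blowUp m k ℤ * (blowUp m k ℤ)ᵀ
  have hP : ∀ x z, P x z = if x.1 = z.1 then 0 else A' x z := by
    rintro ⟨i, p⟩ ⟨j, q⟩
    simp only [P, Matrix.sub_apply, blowUp_mul_transpose_apply]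
    by_cases h : i = j
    · subst h
      simp [hblock]
    · simp [h]
  have hP01 : is01 P := fun x z => by
    rw [hP]
    split_ifs
    exacts [Or.inl rfl, h01 x z]
  have hProw : ∀ x, ∑ z, P x z = 1 := fun x => by
    simp [P, Finset.sum_sub_distrib, hrow, sum_row_blowUp_mul_transpose]
  have hPcol : ∀ z, ∑ x, P x z = 1 := fun z => by
    simp [P, Finset.sum_sub_distrib, hcol, sum_col_blowUp_mul_transpose]
  obtain ⟨e, he⟩ := exists_eq_permMatrix_of_is01 hP01 hProw hPcol
  refine ⟨e, fun x hx => ?_, by rw [← he, add_sub_cancel]⟩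
  have h1 : P x (e x) = 1 := by simp [he, PEquiv.toMatrix_apply]
  rw [hP, if_pos hx.symm] at h1
  exact zero_ne_one h1

theorem transpose_blowUp_mul_permMatrix_mul_blowUp_eq_sub_one {e : Perm (m × k)}
    {X : Matrix m m ℤ} (hoff : ∀ x, (e x).1 ≠ x.1)
    (hA' : A' = blowUp m k ℤ * (blowUp m k ℤ)ᵀ + e.permMatrix ℤ)
    (hout : ∀ i j, i ≠ j → ∑ p, ∑ q, A' (i, p) (j, q) = X i j) (hdiag : ∀ i, X i i = 1) :
    (blowUp m k ℤ)ᵀ * e.permMatrix ℤ * blowUp m k ℤ = X - 1 := by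
  ext i j
  rw [transpose_blowUp_mul_mul_blowUp_apply, Matrix.sub_apply]
  by_cases hij : i = j
  · subst hij
    rw [hdiag, one_apply_eq, sub_self]
    refine sum_eq_zero fun p _ => sum_eq_zero fun q _ => ?_
    have hne : e (i, p) ≠ (i, q) := fun h => hoff (i, p) (by rw [h])
    simp [PEquiv.toMatrix_apply, hne]
  · rw [one_apply_ne hij, sub_zero, ← hout i j hij, hA']
    simp [blowUp_mul_transpose_apply, hij]

theorem apply_fst_perm_fst_eq_zero {e : Perm (m × k)} {X Y : Matrix m m ℤ} (hX01 : is01 X)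
    (hY01 : is01 Y) (hoff : ∀ x, (e x).1 ≠ x.1)
    (hX : (blowUp m k ℤ)ᵀ * e.permMatrix ℤ * blowUp m k ℤ = X - 1) (hXY : X * Yᵀ = 𝕁 - 1)
    (y : m × k) : Y y.1 (e y).1 = 0 := by
  have h1 := apply_le_transpose_blowUp_mul_mul_blowUp_apply (is01_permMatrix e).nonneg y (e y)
  rw [hX, Matrix.sub_apply, one_apply_ne (hoff y).symm, sub_zero] at h1
  have hX1 : X y.1 (e y).1 = 1 :=
    (hX01 _ _).resolve_left fun h0 => by simp [PEquiv.toMatrix_apply, h0] at h1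
  exact hX01.eq_zero_of_mul_transpose_apply_eq_zero hY01 (by simp [hXY]) hX1

end Expansion

theorem stmt10_general {V W : Type*} [Fintype V] [Fintype W] [DecidableEq V]
    (A : Matrix V W ℤ) (hA : is01 A)
    (hrow : ∀ b, ∑ w, A b w = 3) (hcol : ∀ w, ∑ b, A b w = 3)
    (B : Matrix V W ℤ) (hB : is01 B)
    (hAB : A * Bᵀ = Matrix.of (fun _ _ => (1 : ℤ)) - 1)
    -- a perfect matching M = {bᵢ wᵢ}, encoded by a bijection
    (σ : V ≃ W) (hσ : ∀ i, A i (σ i) = 1)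
    -- the biclique expansion e(G,M): each bᵢ becomes Bᵢ = {i} × Fin 2,
    -- each wᵢ becomes Wᵢ = {i} × Fin 2 (indexed via σ)
    (A' : Matrix (V × Fin 2) (V × Fin 2) ℤ) (hA'01 : is01 A')
    (hbic : ∀ i (p q : Fin 2), A' (i, p) (i, q) = 1)
    (hout : ∀ i j, i ≠ j →
      ∑ p : Fin 2, ∑ q : Fin 2, A' (i, p) (j, q) = A i (σ j))
    (hrow' : ∀ x, ∑ y, A' x y = 3) (hcol' : ∀ y, ∑ x, A' x y = 3) :
    ∃ B' : Matrix (V × Fin 2) (V × Fin 2) ℤ, is01 B' ∧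
      A' * B'ᵀ = Matrix.of (fun _ _ => (1 : ℤ)) + 1 := by
  obtain ⟨e, hoff, hA'⟩ := exists_perm_eq_blowUp_mul_transpose_add_permMatrix hA'01 hbic
    (by simpa using hrow') (by simpa using hcol')
  set E := blowUp V (Fin 2) ℤ
  set P := e.permMatrix ℤ
  set X := A.submatrix id σ
  set Y := B.submatrix id σ
  have hX : Eᵀ * P * E = X - 1 :=
    transpose_blowUp_mul_permMatrix_mul_blowUp_eq_sub_one hoff hA' hout hσ
  have hXY : X * Yᵀ = 𝕁 - 1 := by
    rw [transpose_submatrix, submatrix_mul_equiv, hAB]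
    rfl
  have hn : Fintype.card V ≠ 1 := fun h1 => by
    obtain ⟨b⟩ : Nonempty V := Fintype.card_pos_iff.mp (by omega)
    have := hA.sum_le_card b
    rw [hrow, ← Fintype.card_congr σ, h1] at this
    omega
  have hYX : Yᵀ * X = 𝕁 - 1 := mul_eq_ones_sub_one_comm hn hXY <| commute_ones_of_sum_eq (c := 3)
    (fun i => (Equiv.sum_comp σ (A i)).trans (hrow i)) fun j => hcol (σ j)
  have hY01 : is01 Y := fun i j => hB i (σ j)
  refine ⟨P + P * (E * Yᵀ * Eᵀ) * P,
    is01_permMatrix_add_permMatrix_mul_mul e (fun a b => ?_) fun y => ?_, ?_⟩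
  · rw [blowUp_mul_mul_transpose_apply]
    exact hY01 _ _
  · rw [blowUp_mul_mul_transpose_apply]
    exact apply_fst_perm_fst_eq_zero (fun i j => hA i (σ j)) hY01 hoff hX hXY y
  · rw [hA']
    exact mul_transpose_eq_ones_add_one (permMatrix_mul_transpose_permMatrix e)
      (ones_mul_transpose_permMatrix e) blowUp_mul_ones_mul_transpose hX hYX

/-- Biclique expansion of any perfect matching of a cubic negative Lehman graph
yields a cubic Lehman graph with k = 1. -/
theorem stmt10 {V W : Type*} [Fintype V] [Fintype W] [DecidableEq V] [DecidableEq W]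
    (A : Matrix V W ℤ) (hA : is01 A)
    (hrow : ∀ b, ∑ w, A b w = 3) (hcol : ∀ w, ∑ b, A b w = 3)
    (B : Matrix V W ℤ) (hB : is01 B)
    (hAB : A * Bᵀ = Matrix.of (fun _ _ => (1 : ℤ)) - 1)
    -- a perfect matching M = {bᵢ wᵢ}, encoded by a bijection
    (σ : V ≃ W) (hσ : ∀ i, A i (σ i) = 1)
    -- the biclique expansion e(G,M): each bᵢ becomes Bᵢ = {i} × Fin 2,
    -- each wᵢ becomes Wᵢ = {i} × Fin 2 (indexed via σ)
    (A' : Matrix (V × Fin 2) (V × Fin 2) ℤ) (hA'01 : is01 A')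
    (hbic : ∀ i (p q : Fin 2), A' (i, p) (i, q) = 1)
    (hout : ∀ i j, i ≠ j →
      ∑ p : Fin 2, ∑ q : Fin 2, A' (i, p) (j, q) = A i (σ j))
    (hrow' : ∀ x, ∑ y, A' x y = 3) (hcol' : ∀ y, ∑ x, A' x y = 3) :
    ∃ B' : Matrix (V × Fin 2) (V × Fin 2) ℤ, is01 B' ∧
      A' * B'ᵀ = Matrix.of (fun _ _ => (1 : ℤ)) + 1 :=
  stmt10_general A hA hrow hcol B hB hAB σ hσ A' hA'01 hbic hout hrow' hcol'
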